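/- arXiv:2403.14869 — 11 statements merged into one kernel-verified Lean document; each statement's English description precedes it below -/
import Mathlib

section
/- If Bool-valued random variables Y1 and Y0 on a probability space (Ω, ℙ) satisfy ℙ(Y1 = true) > ℙ(Y0 = true) (a positive average treatment effect, i.e., interventionist harm), then ℙ(Y1 = true ∧ Y0 = false) > 0, i.e., counterfactual harm occurs with positive probability. -/
open MeasureTheory ProbabilityTheory

/-- If the average treatment effect is positive (interventionist harm), then
counterfactual harm occurs with positive probability. -/
theorem interventionist_harm_implies_counterfactual_harm
    {Ω : Type*} [MeasureSpace Ω] [IsProbabilityMeasure (ℙ : Measure Ω)]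
    (Y1 Y0 : Ω → Bool) (hY1 : Measurable Y1) (hY0 : Measurable Y0)
    (hATE : (ℙ {ω | Y1 ω = true}).toReal > (ℙ {ω | Y0 ω = true}).toReal) :
    (ℙ {ω | Y1 ω = true ∧ Y0 ω = false}).toReal > 0 := by
  have hsub : {ω | Y1 ω = true} ⊆ {ω | Y1 ω = true ∧ Y0 ω = false} ∪ {ω | Y0 ω = true} := by
    intro ω hω
    cases h0 : Y0 ω
    · exact Or.inl ⟨hω, h0⟩
    · exact Or.inr h0
  have hle : ℙ {ω | Y1 ω = true} ≤
      ℙ {ω | Y1 ω = true ∧ Y0 ω = false} + ℙ {ω | Y0 ω = true} :=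
    le_trans (measure_mono hsub) (measure_union_le _ _)
  have h1 : ℙ {ω | Y1 ω = true ∧ Y0 ω = false} ≠ ⊤ := measure_ne_top _ _
  have h2 : ℙ {ω | Y0 ω = true} ≠ ⊤ := measure_ne_top _ _
  have hler : (ℙ {ω | Y1 ω = true}).toReal ≤
      (ℙ {ω | Y1 ω = true ∧ Y0 ω = false}).toReal + (ℙ {ω | Y0 ω = true}).toReal := by
    rw [← ENNReal.toReal_add h1 h2]
    exact ENNReal.toReal_mono (ENNReal.add_ne_top.mpr ⟨h1, h2⟩) hle
  linarith
end

section
/- For any real numbers p, q with 0 ≤ p ≤ 1 and 0 ≤ q ≤ 1, the infimum of μ({(true, false)}) over all couplings μ of Bernoulli(p) and Bernoulli(q) equals max 0 (p − q); i.e., the sharp lower bound on the probability of counterfactual harm implied by the two marginal death probabilities is max 0 (p − q). -/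
open MeasureTheory

/-- The sharp lower bound on the probability of counterfactual harm over all
couplings of Bernoulli(p) and Bernoulli(q) is `max 0 (p − q)`. -/
theorem sharp_lower_bound_counterfactual_harm
    (p q : ℝ) (hp0 : 0 ≤ p) (hp1 : p ≤ 1) (hq0 : 0 ≤ q) (hq1 : q ≤ 1) :
    sInf {x : ℝ | ∃ μ : Measure (Bool × Bool), IsProbabilityMeasure μ ∧
        (μ {ω | ω.1 = true}).toReal = p ∧
        (μ {ω | ω.2 = true}).toReal = q ∧
        x = (μ {(true, false)}).toReal} = max 0 (p - q) := by
  set a := min p q with ha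
  set b := max 0 (p - q) with hb
  set c := max 0 (q - p) with hc
  set d := 1 - max p q with hd
  have ha0 : 0 ≤ a := le_min hp0 hq0
  have hb0 : 0 ≤ b := le_max_left _ _
  have hc0 : 0 ≤ c := le_max_left _ _
  have hd0 : 0 ≤ d := by simp [hd]; constructor <;> linarith
  have hab : a + b = p := by rcases le_total p q with h | h <;> simp [ha, hb, h] <;> linarith
  have hac : a + c = q := by rcases le_total q p with h | h <;> simp [ha, hc, h] <;> linarith
  have hsum : a + b + c + d = 1 := by
    rcases le_total p q with h | h <;> simp [ha, hb, hc, hd, h] <;> linarith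
  set μ : Measure (Bool × Bool) :=
    ENNReal.ofReal a • Measure.dirac (true, true) + ENNReal.ofReal b • Measure.dirac (true, false)
      + ENNReal.ofReal c • Measure.dirac (false, true)
      + ENNReal.ofReal d • Measure.dirac (false, false) with hμ
  have e0 : μ Set.univ = ENNReal.ofReal 1 := by
    rw [hμ]
    simp only [Measure.add_apply, Measure.smul_apply, smul_eq_mul, Measure.dirac_apply,
      Set.indicator_univ, Pi.one_apply, mul_one]
    rw [← ENNReal.ofReal_add ha0 hb0, ← ENNReal.ofReal_add (by linarith) hc0,
      ← ENNReal.ofReal_add (by linarith) hd0, hsum]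
  have e1 : μ {ω | ω.1 = true} = ENNReal.ofReal p := by
    rw [hμ, ← hab]
    simp [Measure.dirac_apply, Set.indicator_apply, ← ENNReal.ofReal_add, ha0, hb0]
  have e2 : μ {ω | ω.2 = true} = ENNReal.ofReal q := by
    rw [hμ, ← hac]
    simp [Measure.dirac_apply, Set.indicator_apply, ← ENNReal.ofReal_add, ha0, hc0,
      add_comm (ENNReal.ofReal a), add_comm c a]
  have e3 : μ {(true, false)} = ENNReal.ofReal b := by
    rw [hμ]
    simp [Measure.dirac_apply, Set.indicator_apply]
  have hmem : b ∈ {x : ℝ | ∃ μ : Measure (Bool × Bool), IsProbabilityMeasure μ ∧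
        (μ {ω | ω.1 = true}).toReal = p ∧
        (μ {ω | ω.2 = true}).toReal = q ∧
        x = (μ {(true, false)}).toReal} := by
    refine ⟨μ, ⟨by rw [e0]; simp⟩, ?_, ?_, ?_⟩
    · rw [e1, ENNReal.toReal_ofReal hp0]
    · rw [e2, ENNReal.toReal_ofReal hq0]
    · rw [e3, ENNReal.toReal_ofReal hb0]
  have hlb : ∀ x ∈ {x : ℝ | ∃ μ : Measure (Bool × Bool), IsProbabilityMeasure μ ∧
        (μ {ω | ω.1 = true}).toReal = p ∧
        (μ {ω | ω.2 = true}).toReal = q ∧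
        x = (μ {(true, false)}).toReal}, b ≤ x := by
    rintro x ⟨ν, hν, hν1, hν2, rfl⟩
    have hfin : ∀ s : Set (Bool × Bool), ν s ≠ ⊤ := fun s => measure_ne_top ν s
    have hsub : {ω : Bool × Bool | ω.1 = true} ⊆ {(true, false)} ∪ {ω | ω.2 = true} := by
      rintro ⟨x1, x2⟩ h
      simp only [Set.mem_setOf_eq] at h
      subst h
      cases x2 <;> simp
    have h1 : ν {ω | ω.1 = true} ≤ ν {(true, false)} + ν {ω | ω.2 = true} :=
      le_trans (measure_mono hsub) (measure_union_le _ _)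
    have h2 : p ≤ (ν {(true, false)}).toReal + q := by
      rw [← hν1, ← hν2]
      have := ENNReal.toReal_mono (by simp [ENNReal.add_ne_top, hfin]) h1
      rwa [ENNReal.toReal_add (hfin _) (hfin _)] at this
    have h3 : 0 ≤ (ν {(true, false)}).toReal := ENNReal.toReal_nonneg
    simp only [hb, max_le_iff]
    constructor <;> linarith
  exact le_antisymm (csInf_le ⟨b, hlb⟩ hmem) (le_csInf ⟨b, hmem⟩ hlb)
end

section
/- (Proposition 1, part (1)) For real numbers p, q with 0 ≤ p ≤ 1 and 0 ≤ q ≤ 1, the infimum of μ({(true, false)}) over all couplings μ of Bernoulli(p) and Bernoulli(q) is strictly positive if and only if p − q > 0; i.e., the sharp lower bound on the probability of counterfactual harm implied by experimental data is positive exactly when the average treatment effect is positive. -/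
open MeasureTheory

lemma coupling_exists (p q : ℝ) (hp0 : 0 ≤ p) (hp1 : p ≤ 1) (hq0 : 0 ≤ q) (hq1 : q ≤ 1) :
    ∃ μ : Measure (Bool × Bool), IsProbabilityMeasure μ ∧
      (μ {ω | ω.1 = true}).toReal = p ∧
      (μ {ω | ω.2 = true}).toReal = q ∧
      (μ {(true, false)}).toReal = max (p - q) 0 := by
  set a := min p q with ha
  set b := max (p - q) 0 with hb
  set c := max (q - p) 0 with hc
  set d := 1 - max p q with hd
  have ha0 : 0 ≤ a := le_min hp0 hq0
  have hb0 : 0 ≤ b := le_max_right _ _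
  have hc0 : 0 ≤ c := le_max_right _ _
  have hd0 : 0 ≤ d := by simp [hd]; exact ⟨hp1, hq1⟩
  have hab : a + b = p := by rcases le_total p q with h | h <;> simp [ha, hb, h, min_eq_left, min_eq_right, max_eq_left, max_eq_right, sub_nonpos.2 h, sub_nonneg.2 h]
  have hac : a + c = q := by rcases le_total p q with h | h <;> simp [ha, hc, h, min_eq_left, min_eq_right, max_eq_left, max_eq_right, sub_nonpos.2 h, sub_nonneg.2 h]
  have hsum : a + b + c + d = 1 := by
    rcases le_total p q with h | h <;>
      simp [ha, hb, hc, hd, min_eq_left, min_eq_right, max_eq_left, max_eq_right, h,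
        sub_nonpos.2 h, sub_nonneg.2 h]
  refine ⟨ENNReal.ofReal a • Measure.dirac (true, true) + ENNReal.ofReal b • Measure.dirac (true, false)
    + ENNReal.ofReal c • Measure.dirac (false, true) + ENNReal.ofReal d • Measure.dirac (false, false), ?_, ?_, ?_, ?_⟩
  · constructor
    simp [Measure.dirac_apply]
    rw [← ENNReal.ofReal_add ha0 hb0, ← ENNReal.ofReal_add (by linarith) hc0,
      ← ENNReal.ofReal_add (by linarith) hd0, hsum, ENNReal.ofReal_one]
  · simp [Measure.dirac_apply, Set.indicator]
    rw [← ENNReal.ofReal_add ha0 hb0, hab, ENNReal.toReal_ofReal hp0]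
  · simp [Measure.dirac_apply, Set.indicator]
    rw [← ENNReal.ofReal_add ha0 hc0, hac, ENNReal.toReal_ofReal hq0]
  · simp [Measure.dirac_apply, Set.indicator]
    exact hb0

lemma coupling_lb (μ : Measure (Bool × Bool)) [IsProbabilityMeasure μ]
    {p q : ℝ} (hp : (μ {ω | ω.1 = true}).toReal = p)
    (hq : (μ {ω | ω.2 = true}).toReal = q) :
    p - q ≤ (μ {(true, false)}).toReal := by
  have h1 : {ω : Bool × Bool | ω.1 = true} = {(true, true)} ∪ {(true, false)} := by
    ext ⟨x, y⟩; fin_cases x <;> fin_cases y <;> simp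
  have h2 : {ω : Bool × Bool | ω.2 = true} = {(true, true)} ∪ {(false, true)} := by
    ext ⟨x, y⟩; fin_cases x <;> fin_cases y <;> simp
  have e1 : p = (μ {(true, true)}).toReal + (μ {(true, false)}).toReal := by
    rw [← hp, h1, measure_union (by simp) (measurableSet_singleton _),
      ENNReal.toReal_add (measure_ne_top μ _) (measure_ne_top μ _)]
  have e2 : q = (μ {(true, true)}).toReal + (μ {(false, true)}).toReal := by
    rw [← hq, h2, measure_union (by simp) (measurableSet_singleton _),
      ENNReal.toReal_add (measure_ne_top μ _) (measure_ne_top μ _)]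
  have h3 : 0 ≤ (μ {((false : Bool), (true : Bool))}).toReal := ENNReal.toReal_nonneg
  linarith

/-- Proposition 1, part (1): the sharp lower bound on the probability of
counterfactual harm implied by the experimental marginals is strictly positive
if and only if the average treatment effect `p − q` is positive. -/
theorem sharp_lower_bound_pos_iff_ate_pos
    (p q : ℝ) (hp0 : 0 ≤ p) (hp1 : p ≤ 1) (hq0 : 0 ≤ q) (hq1 : q ≤ 1) :
    0 < sInf {x : ℝ | ∃ μ : Measure (Bool × Bool), IsProbabilityMeasure μ ∧
        (μ {ω | ω.1 = true}).toReal = p ∧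
        (μ {ω | ω.2 = true}).toReal = q ∧
        x = (μ {(true, false)}).toReal} ↔ p - q > 0 := by
  set S := {x : ℝ | ∃ μ : Measure (Bool × Bool), IsProbabilityMeasure μ ∧
        (μ {ω | ω.1 = true}).toReal = p ∧
        (μ {ω | ω.2 = true}).toReal = q ∧
        x = (μ {(true, false)}).toReal} with hS
  obtain ⟨μ₀, hμ₀, h1, h2, h3⟩ := coupling_exists p q hp0 hp1 hq0 hq1
  have hmem : max (p - q) 0 ∈ S := ⟨μ₀, hμ₀, h1, h2, h3.symm⟩
  have hne : S.Nonempty := ⟨_, hmem⟩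
  have hbdd : BddBelow S := by
    refine ⟨0, fun x hx => ?_⟩
    obtain ⟨μ, hμ, _, _, hx⟩ := hx
    rw [hx]; exact ENNReal.toReal_nonneg
  constructor
  · intro h
    by_contra hle
    push_neg at hle
    have h4 : max (p - q) 0 = 0 := max_eq_right (by linarith)
    have h5 := csInf_le hbdd hmem
    rw [h4] at h5
    linarith
  · intro h
    have hlb : ∀ x ∈ S, p - q ≤ x := by
      rintro x ⟨μ, hμ, h1, h2, rfl⟩
      exact coupling_lb μ h1 h2
    have := le_csInf hne hlb
    linarith
end

section
/- (Proposition 2, part (2); stratified point-identification criterion) Let π₀, π₁ be positive reals with π₀ + π₁ = 1 and let p₀, p₁, q₀, q₁ ∈ [0, 1]. Then π₀ · max 0 (p₀ − q₀) + π₁ · max 0 (p₁ − q₁) = π₀ · min p₀ (1 − q₀) + π₁ · min p₁ (1 − q₁) if and only if for each a ∈ {0, 1}, p_a ∈ {0, 1} or q_a ∈ {0, 1}; i.e., the probability of counterfactual harm is point identified given the stratum-specific marginals exactly when each stratum has a degenerate death probability in some arm. -/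
lemma gap_nonneg (p q : ℝ) (hp : p ∈ Set.Icc (0:ℝ) 1) (hq : q ∈ Set.Icc (0:ℝ) 1) :
    max 0 (p - q) ≤ min p (1 - q) := by
  obtain ⟨hp0, hp1⟩ := hp; obtain ⟨hq0, hq1⟩ := hq
  rcases max_cases 0 (p - q) with ⟨h1, h2⟩ | ⟨h1, h2⟩ <;>
    rcases min_cases p (1 - q) with ⟨h3, h4⟩ | ⟨h3, h4⟩ <;> linarith

lemma gap_eq_iff (p q : ℝ) (hp : p ∈ Set.Icc (0:ℝ) 1) (hq : q ∈ Set.Icc (0:ℝ) 1) :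
    max 0 (p - q) = min p (1 - q) ↔ (p = 0 ∨ p = 1) ∨ (q = 0 ∨ q = 1) := by
  obtain ⟨hp0, hp1⟩ := hp; obtain ⟨hq0, hq1⟩ := hq
  constructor
  · intro h
    by_contra hc
    push_neg at hc
    obtain ⟨⟨hpn0, hpn1⟩, hqn0, hqn1⟩ := hc
    have h1 : 0 < p := lt_of_le_of_ne hp0 (Ne.symm hpn0)
    have h2 : p < 1 := lt_of_le_of_ne hp1 hpn1
    have h3 : 0 < q := lt_of_le_of_ne hq0 (Ne.symm hqn0)
    have h4 : q < 1 := lt_of_le_of_ne hq1 hqn1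
    have : max 0 (p - q) < min p (1 - q) := by
      rcases max_cases 0 (p - q) with ⟨e1, e2⟩ | ⟨e1, e2⟩ <;>
        rcases min_cases p (1 - q) with ⟨e3, e4⟩ | ⟨e3, e4⟩ <;> linarith
    linarith
  · rintro ((rfl | rfl) | (rfl | rfl))
    · rw [max_eq_left (by linarith), min_eq_left (by linarith)]
    · rw [max_eq_right (by linarith), min_eq_right (by linarith)]
    · rw [max_eq_right (by linarith), min_eq_left (by linarith)]; ring
    · rw [max_eq_left (by linarith), min_eq_right (by linarith)]; ring

/-- Proposition 2, part (2) (stratified point-identification criterion): the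
π-weighted sums of the stratum-wise sharp lower and upper bounds on the
probability of counterfactual harm coincide if and only if each stratum has a
degenerate death probability in some arm. -/
theorem stratified_point_identification_iff_degenerate
    (π₀ π₁ p₀ p₁ q₀ q₁ : ℝ) (hπ₀ : 0 < π₀) (hπ₁ : 0 < π₁) (hπ : π₀ + π₁ = 1)
    (hp₀ : p₀ ∈ Set.Icc (0 : ℝ) 1) (hp₁ : p₁ ∈ Set.Icc (0 : ℝ) 1)
    (hq₀ : q₀ ∈ Set.Icc (0 : ℝ) 1) (hq₁ : q₁ ∈ Set.Icc (0 : ℝ) 1) :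
    π₀ * max 0 (p₀ - q₀) + π₁ * max 0 (p₁ - q₁) =
      π₀ * min p₀ (1 - q₀) + π₁ * min p₁ (1 - q₁) ↔
    ((p₀ = 0 ∨ p₀ = 1) ∨ (q₀ = 0 ∨ q₀ = 1)) ∧
      ((p₁ = 0 ∨ p₁ = 1) ∨ (q₁ = 0 ∨ q₁ = 1)) := by
  have g0 := gap_nonneg p₀ q₀ hp₀ hq₀
  have g1 := gap_nonneg p₁ q₁ hp₁ hq₁
  have e0 := gap_eq_iff p₀ q₀ hp₀ hq₀
  have e1 := gap_eq_iff p₁ q₁ hp₁ hq₁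
  constructor
  · intro h
    have h0 : max 0 (p₀ - q₀) = min p₀ (1 - q₀) := by nlinarith
    have h1 : max 0 (p₁ - q₁) = min p₁ (1 - q₁) := by nlinarith
    exact ⟨e0.mp h0, e1.mp h1⟩
  · rintro ⟨h0, h1⟩
    rw [e0.mpr h0, e1.mpr h1]
end

section
/- Let Y1, Y0, A* be Bool-valued random variables on a probability space (Ω, ℙ) with ℙ(A* = true) > 0 and ℙ(A* = false) > 0. Then ℙ(Y1 = true ∧ Y0 = false) ≥ Σ_{a ∈ {false, true}} ℙ(A* = a) · max 0 (ℙ(Y1 = true | A* = a) − ℙ(Y0 = true | A* = a)); i.e., the probability of counterfactual harm is bounded below by the weighted sum over natural-treatment strata of the positive parts of the conditional average treatment effects. -/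
open MeasureTheory ProbabilityTheory

/-- The probability of counterfactual harm is bounded below by the weighted sum
over natural-treatment strata of the positive parts of the conditional average
treatment effects. -/
theorem counterfactual_harm_ge_weighted_positive_cates
    {Ω : Type*} [MeasureSpace Ω] [IsProbabilityMeasure (ℙ : Measure Ω)]
    (Y1 Y0 As : Ω → Bool)
    (hY1 : Measurable Y1) (hY0 : Measurable Y0) (hAs : Measurable As)
    (hpos1 : 0 < (ℙ {ω | As ω = true}).toReal)
    (hpos0 : 0 < (ℙ {ω | As ω = false}).toReal) :
    (ℙ {ω | Y1 ω = true ∧ Y0 ω = false}).toReal ≥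
      ∑ a : Bool, (ℙ {ω | As ω = a}).toReal *
        max 0
          ((ℙ {ω | Y1 ω = true ∧ As ω = a}).toReal / (ℙ {ω | As ω = a}).toReal -
            (ℙ {ω | Y0 ω = true ∧ As ω = a}).toReal / (ℙ {ω | As ω = a}).toReal) := by
  have mS : ∀ a : Bool, MeasurableSet {ω | (Y1 ω = true ∧ Y0 ω = false) ∧ As ω = a} := by
    intro a
    exact (((hY1 (measurableSet_singleton true)).inter
      (hY0 (measurableSet_singleton false))).inter (hAs (measurableSet_singleton a)))
  have key : ∀ a : Bool,
      (ℙ {ω | As ω = a}).toReal *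
        max 0 ((ℙ {ω | Y1 ω = true ∧ As ω = a}).toReal / (ℙ {ω | As ω = a}).toReal -
          (ℙ {ω | Y0 ω = true ∧ As ω = a}).toReal / (ℙ {ω | As ω = a}).toReal) ≤
      (ℙ {ω | (Y1 ω = true ∧ Y0 ω = false) ∧ As ω = a}).toReal := by
    intro a
    have hpa : 0 < (ℙ {ω | As ω = a}).toReal := by cases a <;> assumption
    rw [div_sub_div_same, mul_max_of_nonneg _ _ hpa.le, mul_zero,
      mul_div_cancel₀ _ hpa.ne']
    apply max_le ENNReal.toReal_nonneg
    have hsub : {ω | Y1 ω = true ∧ As ω = a} ⊆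
        {ω | (Y1 ω = true ∧ Y0 ω = false) ∧ As ω = a} ∪ {ω | Y0 ω = true ∧ As ω = a} := by
      intro ω hω
      rcases hω with ⟨h1, h2⟩
      cases h0 : Y0 ω
      · exact Or.inl ⟨⟨h1, h0⟩, h2⟩
      · exact Or.inr ⟨h0, h2⟩
    have hle : ℙ {ω | Y1 ω = true ∧ As ω = a} ≤
        ℙ {ω | (Y1 ω = true ∧ Y0 ω = false) ∧ As ω = a} + ℙ {ω | Y0 ω = true ∧ As ω = a} :=
      le_trans (measure_mono hsub) (measure_union_le _ _)
    have hle' : (ℙ {ω | Y1 ω = true ∧ As ω = a}).toReal ≤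
        (ℙ {ω | (Y1 ω = true ∧ Y0 ω = false) ∧ As ω = a}).toReal +
          (ℙ {ω | Y0 ω = true ∧ As ω = a}).toReal := by
      rw [← ENNReal.toReal_add (measure_ne_top _ _) (measure_ne_top _ _)]
      exact ENNReal.toReal_mono (ENNReal.add_ne_top.mpr ⟨measure_ne_top _ _, measure_ne_top _ _⟩) hle
    linarith
  have hdisj : Disjoint {ω | (Y1 ω = true ∧ Y0 ω = false) ∧ As ω = true}
      {ω | (Y1 ω = true ∧ Y0 ω = false) ∧ As ω = false} := by
    rw [Set.disjoint_left]
    rintro ω ⟨_, h1⟩ ⟨_, h2⟩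
    simp [h1] at h2
  have hunion : {ω | (Y1 ω = true ∧ Y0 ω = false) ∧ As ω = true} ∪
      {ω | (Y1 ω = true ∧ Y0 ω = false) ∧ As ω = false} = {ω | Y1 ω = true ∧ Y0 ω = false} := by
    ext ω
    simp only [Set.mem_union, Set.mem_setOf_eq]
    constructor
    · rintro (⟨h, _⟩ | ⟨h, _⟩) <;> exact h
    · intro h
      cases hA : As ω
      · exact Or.inr ⟨h, rfl⟩
      · exact Or.inl ⟨h, rfl⟩
  have htot : (ℙ {ω | Y1 ω = true ∧ Y0 ω = false}).toReal =
      (ℙ {ω | (Y1 ω = true ∧ Y0 ω = false) ∧ As ω = true}).toReal +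
        (ℙ {ω | (Y1 ω = true ∧ Y0 ω = false) ∧ As ω = false}).toReal := by
    rw [← ENNReal.toReal_add (measure_ne_top _ _) (measure_ne_top _ _),
      ← measure_union hdisj (mS false), hunion]
  rw [Fintype.sum_bool, htot]
  have := key true
  have := key false
  linarith
end

section
/- Let π₀, π₁ be positive reals with π₀ + π₁ = 1 and p₀, p₁, q₀, q₁ ∈ [0, 1]. The infimum of ℙ(Y1 = true ∧ Y0 = false) over all joint probability distributions of Bool-valued (Y1, Y0, A*) satisfying ℙ(A* = a) = π_a, ℙ(Y1 = true | A* = a) = p_a and ℙ(Y0 = true | A* = a) = q_a for each a ∈ {0, 1} equals π₀ · max 0 (p₀ − q₀) + π₁ · max 0 (p₁ − q₁); i.e., the sharp lower bound on the probability of counterfactual harm implied by experimental and non-experimental data combined is the weighted sum of the positive parts of the stratum-specific average treatment effects. -/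
open MeasureTheory

/-- Minimal-overlap coupling weights for a pair of Bernoulli marginals. -/
noncomputable def cplW (p q : ℝ) : Bool → Bool → ℝ
  | true, true => min p q
  | true, false => max 0 (p - q)
  | false, true => max 0 (q - p)
  | false, false => min (1 - p) (1 - q)

lemma cplW_nonneg {p q : ℝ} (hp : p ∈ Set.Icc (0:ℝ) 1) (hq : q ∈ Set.Icc (0:ℝ) 1) :
    ∀ y1 y0, 0 ≤ cplW p q y1 y0 := by
  obtain ⟨hp0, hp1⟩ := hp; obtain ⟨hq0, hq1⟩ := hq
  rintro (_|_) (_|_) <;> simp only [cplW, min_def, max_def] <;> split_ifs <;> linarith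

lemma cplW_sum (p q : ℝ) :
    cplW p q true true + cplW p q true false + cplW p q false true +
      cplW p q false false = 1 := by
  simp only [cplW, min_def, max_def]; split_ifs <;> linarith

lemma cplW_p (p q : ℝ) : cplW p q true true + cplW p q true false = p := by
  simp only [cplW, min_def, max_def]; split_ifs <;> linarith

lemma cplW_q (p q : ℝ) : cplW p q true true + cplW p q false true = q := by
  simp only [cplW, min_def, max_def]; split_ifs <;> linarith

lemma harm_mu_apply (r : Bool × Bool × Bool → ℝ) (hr : ∀ ω, 0 ≤ r ω)
    (s : Set (Bool × Bool × Bool)) [DecidablePred (· ∈ s)] :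
    ((∑ ω : Bool × Bool × Bool, ENNReal.ofReal (r ω) • Measure.dirac ω) s) =
      ENNReal.ofReal (∑ ω : Bool × Bool × Bool, if ω ∈ s then r ω else 0) := by
  rw [Measure.finset_sum_apply, ENNReal.ofReal_sum_of_nonneg]
  · refine Finset.sum_congr rfl fun ω _ => ?_
    simp only [Measure.smul_apply, Measure.dirac_apply, Set.indicator, smul_eq_mul]
    split_ifs <;> simp
  · intro i _; split_ifs with h
    · exact hr i
    · exact le_rfl

lemma harm_mu_apply_toReal (r : Bool × Bool × Bool → ℝ) (hr : ∀ ω, 0 ≤ r ω)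
    (s : Set (Bool × Bool × Bool)) [DecidablePred (· ∈ s)] :
    (((∑ ω : Bool × Bool × Bool, ENNReal.ofReal (r ω) • Measure.dirac ω) s)).toReal =
      ∑ ω : Bool × Bool × Bool, if ω ∈ s then r ω else 0 := by
  rw [harm_mu_apply r hr s, ENNReal.toReal_ofReal]
  exact Finset.sum_nonneg fun i _ => by split_ifs with h; exacts [hr i, le_rfl]

/-- The sharp lower bound on the probability of counterfactual harm implied by
combined experimental and non-experimental data: the infimum of
`ℙ(Y1 = true ∧ Y0 = false)` over joint distributions of `(Y1, Y0, A*)` with the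
given stratum proportions and stratum-specific marginals equals the weighted
sum of the positive parts of the stratum-specific average treatment effects.
A point `ω : Bool × Bool × Bool` encodes `(Y1, Y0, A*)`, with stratum `a = 0`
corresponding to `A* = false` and stratum `a = 1` to `A* = true`. -/
theorem sharp_lower_bound_with_nonexperimental_data
    (π₀ π₁ p₀ p₁ q₀ q₁ : ℝ) (hπ₀ : 0 < π₀) (hπ₁ : 0 < π₁) (hπ : π₀ + π₁ = 1)
    (hp₀ : p₀ ∈ Set.Icc (0 : ℝ) 1) (hp₁ : p₁ ∈ Set.Icc (0 : ℝ) 1)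
    (hq₀ : q₀ ∈ Set.Icc (0 : ℝ) 1) (hq₁ : q₁ ∈ Set.Icc (0 : ℝ) 1) :
    sInf {x : ℝ | ∃ μ : Measure (Bool × Bool × Bool), IsProbabilityMeasure μ ∧
        (μ {ω | ω.2.2 = false}).toReal = π₀ ∧
        (μ {ω | ω.2.2 = true}).toReal = π₁ ∧
        (μ {ω | ω.1 = true ∧ ω.2.2 = false}).toReal /
          (μ {ω | ω.2.2 = false}).toReal = p₀ ∧
        (μ {ω | ω.1 = true ∧ ω.2.2 = true}).toReal /
          (μ {ω | ω.2.2 = true}).toReal = p₁ ∧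
        (μ {ω | ω.2.1 = true ∧ ω.2.2 = false}).toReal /
          (μ {ω | ω.2.2 = false}).toReal = q₀ ∧
        (μ {ω | ω.2.1 = true ∧ ω.2.2 = true}).toReal /
          (μ {ω | ω.2.2 = true}).toReal = q₁ ∧
        x = (μ {ω | ω.1 = true ∧ ω.2.1 = false}).toReal} =
      π₀ * max 0 (p₀ - q₀) + π₁ * max 0 (p₁ - q₁) := by
  classical
  set V : ℝ := π₀ * max 0 (p₀ - q₀) + π₁ * max 0 (p₁ - q₁) with hV
  set S := {x : ℝ | ∃ μ : Measure (Bool × Bool × Bool), IsProbabilityMeasure μ ∧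
        (μ {ω | ω.2.2 = false}).toReal = π₀ ∧
        (μ {ω | ω.2.2 = true}).toReal = π₁ ∧
        (μ {ω | ω.1 = true ∧ ω.2.2 = false}).toReal /
          (μ {ω | ω.2.2 = false}).toReal = p₀ ∧
        (μ {ω | ω.1 = true ∧ ω.2.2 = true}).toReal /
          (μ {ω | ω.2.2 = true}).toReal = p₁ ∧
        (μ {ω | ω.2.1 = true ∧ ω.2.2 = false}).toReal /
          (μ {ω | ω.2.2 = false}).toReal = q₀ ∧
        (μ {ω | ω.2.1 = true ∧ ω.2.2 = true}).toReal /
          (μ {ω | ω.2.2 = true}).toReal = q₁ ∧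
        x = (μ {ω | ω.1 = true ∧ ω.2.1 = false}).toReal} with hS
  -- the witness measure
  set r : Bool × Bool × Bool → ℝ := fun ω =>
    (if ω.2.2 then π₁ else π₀) *
      cplW (if ω.2.2 then p₁ else p₀) (if ω.2.2 then q₁ else q₀) ω.1 ω.2.1 with hr
  have hrnn : ∀ ω, 0 ≤ r ω := by
    rintro ⟨y1, y0, (_|_)⟩ <;>
      exact mul_nonneg (by positivity) (by first
        | exact cplW_nonneg hp₀ hq₀ _ _
        | exact cplW_nonneg hp₁ hq₁ _ _)
  set μ : Measure (Bool × Bool × Bool) :=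
    ∑ ω : Bool × Bool × Bool, ENNReal.ofReal (r ω) • Measure.dirac ω with hμdef
  have happ : ∀ (s : Set (Bool × Bool × Bool)),
      (μ s).toReal = ∑ ω : Bool × Bool × Bool, if ω ∈ s then r ω else 0 :=
    fun s => harm_mu_apply_toReal r hrnn s
  have e0 := cplW_sum p₀ q₀
  have e1 := cplW_sum p₁ q₁
  have ep0 := cplW_p p₀ q₀
  have ep1 := cplW_p p₁ q₁
  have eq0 := cplW_q p₀ q₀
  have eq1 := cplW_q p₁ q₁
  have hAF : (μ {ω | ω.2.2 = false}).toReal = π₀ := by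
    rw [happ, Fintype.sum_prod_type]
    simp only [Fintype.sum_prod_type, Fintype.sum_bool, Set.mem_setOf_eq, hr]
    norm_num; linear_combination π₀ * e0
  have hAT : (μ {ω | ω.2.2 = true}).toReal = π₁ := by
    rw [happ, Fintype.sum_prod_type]
    simp only [Fintype.sum_prod_type, Fintype.sum_bool, Set.mem_setOf_eq, hr]
    norm_num; linear_combination π₁ * e1
  have hY1F : (μ {ω | ω.1 = true ∧ ω.2.2 = false}).toReal = p₀ * π₀ := by
    rw [happ, Fintype.sum_prod_type]
    simp only [Fintype.sum_prod_type, Fintype.sum_bool, Set.mem_setOf_eq, hr]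
    norm_num; linear_combination π₀ * ep0
  have hY1T : (μ {ω | ω.1 = true ∧ ω.2.2 = true}).toReal = p₁ * π₁ := by
    rw [happ, Fintype.sum_prod_type]
    simp only [Fintype.sum_prod_type, Fintype.sum_bool, Set.mem_setOf_eq, hr]
    norm_num; linear_combination π₁ * ep1
  have hY0F : (μ {ω | ω.2.1 = true ∧ ω.2.2 = false}).toReal = q₀ * π₀ := by
    rw [happ, Fintype.sum_prod_type]
    simp only [Fintype.sum_prod_type, Fintype.sum_bool, Set.mem_setOf_eq, hr]
    norm_num; linear_combination π₀ * eq0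
  have hY0T : (μ {ω | ω.2.1 = true ∧ ω.2.2 = true}).toReal = q₁ * π₁ := by
    rw [happ, Fintype.sum_prod_type]
    simp only [Fintype.sum_prod_type, Fintype.sum_bool, Set.mem_setOf_eq, hr]
    norm_num; linear_combination π₁ * eq1
  have hHarm : (μ {ω | ω.1 = true ∧ ω.2.1 = false}).toReal = V := by
    rw [happ, Fintype.sum_prod_type]
    simp only [Fintype.sum_prod_type, Fintype.sum_bool, Set.mem_setOf_eq, hr]
    norm_num [cplW, hV]; ring
  have hmem : V ∈ S := by
    refine ⟨μ, ?_, hAF, hAT, ?_, ?_, ?_, ?_, hHarm.symm⟩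
    · constructor
      rw [harm_mu_apply r hrnn Set.univ]
      have : (∑ ω : Bool × Bool × Bool, if ω ∈ Set.univ then r ω else 0) = 1 := by
        simp only [Set.mem_univ, if_true]
        rw [Fintype.sum_prod_type]
        simp only [Fintype.sum_prod_type, Fintype.sum_bool, hr]
        norm_num; linear_combination π₀ * e0 + π₁ * e1 + hπ
      rw [this, ENNReal.ofReal_one]
    · rw [hY1F, hAF, mul_div_assoc, div_self (ne_of_gt hπ₀), mul_one]
    · rw [hY1T, hAT, mul_div_assoc, div_self (ne_of_gt hπ₁), mul_one]
    · rw [hY0F, hAF, mul_div_assoc, div_self (ne_of_gt hπ₀), mul_one]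
    · rw [hY0T, hAT, mul_div_assoc, div_self (ne_of_gt hπ₁), mul_one]
  have hlb : ∀ x ∈ S, V ≤ x := by
    rintro x ⟨ν, hprob, h1, h2, h3, h4, h5, h6, rfl⟩
    have hm : ∀ s : Set (Bool × Bool × Bool), MeasurableSet s :=
      fun s => (Set.to_countable s).measurableSet
    rw [h1, div_eq_iff (ne_of_gt hπ₀)] at h3 h5
    rw [h2, div_eq_iff (ne_of_gt hπ₁)] at h4 h6
    set A0 := {ω : Bool × Bool × Bool | ω.1 = true ∧ ω.2.1 = false ∧ ω.2.2 = false} with hA0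
    set A1 := {ω : Bool × Bool × Bool | ω.1 = true ∧ ω.2.1 = false ∧ ω.2.2 = true} with hA1
    have key : ∀ (b : Bool), (ν {ω | ω.1 = true ∧ ω.2.2 = b}).toReal ≤
        (ν {ω | ω.1 = true ∧ ω.2.1 = false ∧ ω.2.2 = b}).toReal +
          (ν {ω | ω.2.1 = true ∧ ω.2.2 = b}).toReal := by
      intro b
      have hsub : {ω : Bool × Bool × Bool | ω.1 = true ∧ ω.2.2 = b} ⊆
          {ω | ω.1 = true ∧ ω.2.1 = false ∧ ω.2.2 = b} ∪
            {ω | ω.2.1 = true ∧ ω.2.2 = b} := by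
        rintro ⟨y1, y0, a⟩ ⟨hy, ha⟩
        cases y0
        · exact Or.inl ⟨hy, rfl, ha⟩
        · exact Or.inr ⟨rfl, ha⟩
      have hle := (measure_mono (μ := ν) hsub).trans (measure_union_le _ _)
      have h' := ENNReal.toReal_mono
        (ENNReal.add_ne_top.2 ⟨measure_ne_top ν _, measure_ne_top ν _⟩) hle
      rwa [ENNReal.toReal_add (measure_ne_top ν _) (measure_ne_top ν _)] at h'
    have k0 := key false
    have k1 := key true
    rw [h3, h5] at k0
    rw [h4, h6] at k1
    have hsplit : (ν {ω | ω.1 = true ∧ ω.2.1 = false}).toReal =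
        (ν A0).toReal + (ν A1).toReal := by
      have hd : Disjoint A0 A1 := by
        rw [Set.disjoint_left]
        rintro ⟨y1, y0, a⟩ ⟨_, _, ha⟩ ⟨_, _, ha'⟩
        rw [ha] at ha'; exact Bool.false_ne_true ha'
      have hu : {ω : Bool × Bool × Bool | ω.1 = true ∧ ω.2.1 = false} = A0 ∪ A1 := by
        ext ⟨y1, y0, a⟩
        cases a <;> simp [hA0, hA1]
      rw [hu, measure_union hd (hm A1),
        ENNReal.toReal_add (measure_ne_top ν _) (measure_ne_top ν _)]
    have n0 : (0:ℝ) ≤ (ν A0).toReal := ENNReal.toReal_nonneg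
    have n1 : (0:ℝ) ≤ (ν A1).toReal := ENNReal.toReal_nonneg
    have m0 : π₀ * max 0 (p₀ - q₀) ≤ (ν A0).toReal := by
      have : π₀ * max 0 (p₀ - q₀) = max 0 (p₀ * π₀ - q₀ * π₀) := by
        rw [mul_max_of_nonneg _ _ hπ₀.le, mul_zero]; ring_nf
      rw [this]
      exact max_le n0 (by linarith)
    have m1 : π₁ * max 0 (p₁ - q₁) ≤ (ν A1).toReal := by
      have : π₁ * max 0 (p₁ - q₁) = max 0 (p₁ * π₁ - q₁ * π₁) := by
        rw [mul_max_of_nonneg _ _ hπ₁.le, mul_zero]; ring_nf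
      rw [this]
      exact max_le n1 (by linarith)
    rw [hsplit]
    linarith
  exact le_antisymm (csInf_le ⟨V, hlb⟩ hmem) (le_csInf ⟨V, hmem⟩ hlb)
end

section
/- (Proposition 4 of Sarvet & Stensrud, used in the proofs) Let π₀, π₁ be positive reals with π₀ + π₁ = 1 and let c₀, c₁ be reals. Then π₀ · max 0 c₀ + π₁ · max 0 c₁ > max 0 (π₀·c₀ + π₁·c₁) if and only if (c₀ > 0 and c₁ < 0) or (c₀ < 0 and c₁ > 0); i.e., the sharp lower bound on the probability of counterfactual harm strictly improves upon the addition of non-experimental data exactly when the two conditional average treatment effects given the natural treatment value have strictly opposite signs. -/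
/-- Proposition 4 of Sarvet & Stensrud: the sharp lower bound on the probability
of counterfactual harm strictly improves upon the addition of non-experimental
data exactly when the two conditional average treatment effects given the
natural treatment value have strictly opposite signs. -/
theorem lower_bound_improves_iff_opposite_signs
    (π₀ π₁ c₀ c₁ : ℝ) (hπ₀ : 0 < π₀) (hπ₁ : 0 < π₁) (hπ : π₀ + π₁ = 1) :
    π₀ * max 0 c₀ + π₁ * max 0 c₁ > max 0 (π₀ * c₀ + π₁ * c₁) ↔
      ((c₀ > 0 ∧ c₁ < 0) ∨ (c₀ < 0 ∧ c₁ > 0)) := by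
  rcases lt_trichotomy c₀ 0 with h0 | h0 | h0 <;>
    rcases lt_trichotomy c₁ 0 with h1 | h1 | h1 <;>
    simp only [max_eq_left, max_eq_right, h0, h1, h0.le, h1.le, le_refl, mul_zero,
      zero_mul, add_zero, zero_add, max_self, le_of_lt] <;>
  constructor <;> intro h <;>
  first
    | exact Or.inr ⟨trivial, trivial⟩
    | exact Or.inl ⟨trivial, trivial⟩
    | (rw [gt_iff_lt, max_lt_iff] at h; exfalso; nlinarith [h.1, h.2])
    | (rcases h with ⟨a,b⟩|⟨a,b⟩ <;> rw [gt_iff_lt, max_lt_iff] <;> constructor <;> nlinarith)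
    | simp at h
end

section
/- (Proposition 3, stratified-premise case) Let π₀, π₁ be positive reals with π₀ + π₁ = 1 and p₀, p₁, q₀, q₁ ∈ [0, 1]. If π₀ · max 0 (p₀ − q₀) + π₁ · max 0 (p₁ − q₁) = π₀ · min p₀ (1 − q₀) + π₁ · min p₁ (1 − q₁) and this common value is strictly positive, then for each a ∈ {0, 1}: min (1 − p_a) q_a = 0 or min p_a (1 − q_a) = 0; i.e., if the probability of counterfactual harm is point identified and positive using both data sources, then within each natural-treatment stratum either counterfactual benefit is impossible or counterfactual harm is impossible. -/
lemma key_strat (p q : ℝ) (hp : p ∈ Set.Icc (0:ℝ) 1) (hq : q ∈ Set.Icc (0:ℝ) 1)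
    (h : max 0 (p - q) = min p (1 - q)) :
    min (1 - p) q = 0 ∨ min p (1 - q) = 0 := by
  obtain ⟨hp0, hp1⟩ := hp
  obtain ⟨hq0, hq1⟩ := hq
  rcases eq_or_lt_of_le (show (0:ℝ) ≤ min p (1-q) from le_min hp0 (by linarith)) with h0 | h0
  · right; exact h0.symm
  · left
    have hmax : max 0 (p - q) = p - q := by
      rcases max_cases 0 (p - q) with ⟨h1, h2⟩ | ⟨h1, h2⟩
      · exfalso; rw [h1] at h; linarith [h ▸ h0]
      · exact h1
    rw [hmax] at h
    rcases min_cases p (1 - q) with ⟨h1, h2⟩ | ⟨h1, h2⟩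
    · have : q = 0 := by linarith [h ▸ h1]
      rw [this]; exact min_eq_right (by linarith)
    · have : p = 1 := by linarith [h ▸ h1]
      rw [this]; simpa using min_eq_left hq0

/-- Proposition 3 (stratified-premise case): if the probability of
counterfactual harm is point identified and positive using both data sources,
then within each natural-treatment stratum either counterfactual benefit is
impossible or counterfactual harm is impossible. -/
theorem point_identified_positive_harm_stratified
    (π₀ π₁ p₀ p₁ q₀ q₁ : ℝ) (hπ₀ : 0 < π₀) (hπ₁ : 0 < π₁) (hπ : π₀ + π₁ = 1)
    (hp₀ : p₀ ∈ Set.Icc (0 : ℝ) 1) (hp₁ : p₁ ∈ Set.Icc (0 : ℝ) 1)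
    (hq₀ : q₀ ∈ Set.Icc (0 : ℝ) 1) (hq₁ : q₁ ∈ Set.Icc (0 : ℝ) 1)
    (hid : π₀ * max 0 (p₀ - q₀) + π₁ * max 0 (p₁ - q₁) =
      π₀ * min p₀ (1 - q₀) + π₁ * min p₁ (1 - q₁))
    (hpos : 0 < π₀ * max 0 (p₀ - q₀) + π₁ * max 0 (p₁ - q₁)) :
    (min (1 - p₀) q₀ = 0 ∨ min p₀ (1 - q₀) = 0) ∧
      (min (1 - p₁) q₁ = 0 ∨ min p₁ (1 - q₁) = 0) := by
  have hle₀ : max 0 (p₀ - q₀) ≤ min p₀ (1 - q₀) := by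
    obtain ⟨a, b⟩ := hp₀; obtain ⟨c, d⟩ := hq₀
    apply max_le (le_min a (by linarith)) (le_min (by linarith) (by linarith))
  have hle₁ : max 0 (p₁ - q₁) ≤ min p₁ (1 - q₁) := by
    obtain ⟨a, b⟩ := hp₁; obtain ⟨c, d⟩ := hq₁
    apply max_le (le_min a (by linarith)) (le_min (by linarith) (by linarith))
  have e₀ : max 0 (p₀ - q₀) = min p₀ (1 - q₀) := by nlinarith
  have e₁ : max 0 (p₁ - q₁) = min p₁ (1 - q₁) := by nlinarith
  exact ⟨key_strat p₀ q₀ hp₀ hq₀ e₀, key_strat p₁ q₁ hp₁ hq₁ e₁⟩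
end

section
/- (Proposition 3, marginal-premise case) Let π₀, π₁ be positive reals with π₀ + π₁ = 1 and p₀, p₁, q₀, q₁ ∈ [0, 1], and set p = π₀·p₀ + π₁·p₁ and q = π₀·q₀ + π₁·q₁. If max 0 (p − q) = min p (1 − q) and this common value is strictly positive, then for each a ∈ {0, 1}: min (1 − p_a) q_a = 0; i.e., if the probability of counterfactual harm is point identified and positive from the experimental marginals alone, then counterfactual benefit is impossible within every natural-treatment stratum. -/
/-- Proposition 3 (marginal-premise case): if the probability of counterfactual
harm is point identified and positive from the experimental marginals alone,
then counterfactual benefit is impossible within every natural-treatment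
stratum. -/
theorem point_identified_positive_harm_marginal
    (π₀ π₁ p₀ p₁ q₀ q₁ : ℝ) (hπ₀ : 0 < π₀) (hπ₁ : 0 < π₁) (hπ : π₀ + π₁ = 1)
    (hp₀ : p₀ ∈ Set.Icc (0 : ℝ) 1) (hp₁ : p₁ ∈ Set.Icc (0 : ℝ) 1)
    (hq₀ : q₀ ∈ Set.Icc (0 : ℝ) 1) (hq₁ : q₁ ∈ Set.Icc (0 : ℝ) 1)
    (hid : max 0 (π₀ * p₀ + π₁ * p₁ - (π₀ * q₀ + π₁ * q₁)) =
      min (π₀ * p₀ + π₁ * p₁) (1 - (π₀ * q₀ + π₁ * q₁)))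
    (hpos : 0 < max 0 (π₀ * p₀ + π₁ * p₁ - (π₀ * q₀ + π₁ * q₁))) :
    min (1 - p₀) q₀ = 0 ∧ min (1 - p₁) q₁ = 0 := by
  obtain ⟨hp₀0, hp₀1⟩ := hp₀
  obtain ⟨hp₁0, hp₁1⟩ := hp₁
  obtain ⟨hq₀0, hq₀1⟩ := hq₀
  obtain ⟨hq₁0, hq₁1⟩ := hq₁
  have hgt : 0 < π₀ * p₀ + π₁ * p₁ - (π₀ * q₀ + π₁ * q₁) := by
    by_contra h
    push_neg at h
    rw [max_eq_left h] at hpos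
    exact lt_irrefl 0 hpos
  rw [max_eq_right hgt.le] at hid
  rcases min_cases (π₀ * p₀ + π₁ * p₁) (1 - (π₀ * q₀ + π₁ * q₁)) with ⟨h, _⟩ | ⟨h, _⟩
  · -- q = 0
    have hq : π₀ * q₀ + π₁ * q₁ = 0 := by linarith [hid.trans h]
    have hq0 : q₀ = 0 := by nlinarith
    have hq1 : q₁ = 0 := by nlinarith
    constructor
    · rw [hq0]; exact min_eq_right (by linarith)
    · rw [hq1]; exact min_eq_right (by linarith)
  · -- p = 1
    have hp : π₀ * p₀ + π₁ * p₁ = 1 := by linarith [hid.trans h]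
    have hp0 : p₀ = 1 := by nlinarith
    have hp1 : p₁ = 1 := by nlinarith
    constructor
    · rw [hp0, show (1:ℝ) - 1 = 0 by ring]; exact min_eq_left hq₀0
    · rw [hp1, show (1:ℝ) - 1 = 0 by ring]; exact min_eq_left hq₁0
end

section
/- (Identification of the treated-stratum outcome, ATT identification) Let Y, A, R, A*, Y1, Y0 be Bool-valued random variables on a probability space (Ω, ℙ) such that: (consistency) Y ω = if A ω then Y1 ω else Y0 ω for all ω; (non-experimental data) A ω = A* ω for all ω with R ω = false; (fusion) the triple (Y1, Y0, A*) is independent of R; and ℙ(A* = true ∧ R = false) > 0 and ℙ(A* = true) > 0. Then ℙ(Y1 = true | A* = true) = ℙ(Y = true | A = true ∧ R = false); i.e., the death probability under treatment among those who would naturally take treatment is identified by the observed death frequency among treated individuals in the non-experimental data. -/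
open MeasureTheory ProbabilityTheory

/-!
On the non-experimental stratum `R = false` the received treatment is the natural one, and by
consistency the observed outcome of a treated individual is `Y1`. So the event
`Y ∧ A ∧ R = false` is `Y1 ∧ A* ∧ R = false`, and `A ∧ R = false` is `A* ∧ R = false`. Fusion
makes `(Y1, Y0, A*)` independent of `R`, so intersecting both events with `R = false`
multiplies their probabilities by the same nonzero factor `ℙ(R = false)`, which cancels.
-/

theorem ProbabilityTheory.IndepFun.measureReal_inter_preimage_div
    {Ω α β : Type*} {mΩ : MeasurableSpace Ω} {μ : Measure Ω} [IsFiniteMeasure μ]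
    {mα : MeasurableSpace α} {mβ : MeasurableSpace β} {f : Ω → α} {g : Ω → β}
    (hfg : IndepFun f g μ) {s s' : Set α} {t : Set β}
    (hs : MeasurableSet s) (hs' : MeasurableSet s') (ht : MeasurableSet t)
    (hμt : μ (g ⁻¹' t) ≠ 0) :
    μ.real (f ⁻¹' s ∩ g ⁻¹' t) / μ.real (f ⁻¹' s' ∩ g ⁻¹' t) =
      μ.real (f ⁻¹' s) / μ.real (f ⁻¹' s') := by
  have hμt' : μ.real (g ⁻¹' t) ≠ 0 := by
    rw [measureReal_def, ENNReal.toReal_ne_zero]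
    exact ⟨hμt, measure_ne_top μ _⟩
  simp only [measureReal_def, hfg.measure_inter_preimage_eq_mul _ _ hs ht,
    hfg.measure_inter_preimage_eq_mul _ _ hs' ht, ENNReal.toReal_mul]
  exact mul_div_mul_right _ _ hμt'

theorem att_identification_general
    {Ω : Type*} [MeasureSpace Ω] [IsProbabilityMeasure (ℙ : Measure Ω)]
    (Y A R As Y1 Y0 : Ω → Bool)
    (hcons : ∀ ω, Y ω = if A ω then Y1 ω else Y0 ω)
    (hnonexp : ∀ ω, R ω = false → A ω = As ω)
    (hfusion : IndepFun (fun ω => (Y1 ω, Y0 ω, As ω)) R)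
    (hpos1 : 0 < (ℙ {ω | As ω = true ∧ R ω = false}).toReal) :
    (ℙ {ω | Y1 ω = true ∧ As ω = true}).toReal /
        (ℙ {ω | As ω = true}).toReal =
      (ℙ {ω | Y ω = true ∧ (A ω = true ∧ R ω = false)}).toReal /
        (ℙ {ω | A ω = true ∧ R ω = false}).toReal := by
  set f : Ω → Bool × Bool × Bool := fun ω => (Y1 ω, Y0 ω, As ω)
  have hdeaths : {ω | Y ω = true ∧ (A ω = true ∧ R ω = false)} =
      f ⁻¹' {p | p.1 = true ∧ p.2.2 = true} ∩ R ⁻¹' {false} := by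
    ext ω
    by_cases hr : R ω = false
    · cases h : As ω <;> simp [f, hcons ω, hnonexp ω hr, hr, h]
    · simp [hr]
  have htreated : {ω | A ω = true ∧ R ω = false} = f ⁻¹' {p | p.2.2 = true} ∩ R ⁻¹' {false} := by
    ext ω
    by_cases hr : R ω = false
    · simp [f, hnonexp ω hr, hr]
    · simp [hr]
  have hnonexp_ne_zero : ℙ (R ⁻¹' {false}) ≠ 0 :=
    fun h ↦ hpos1.ne' <| by
      rw [ENNReal.toReal_eq_zero_iff]
      exact Or.inl (measure_mono_null (fun ω hω ↦ hω.2) h)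
  rw [hdeaths, htreated]
  exact (hfusion.measureReal_inter_preimage_div (s := {p | p.1 = true ∧ p.2.2 = true})
    (s' := {p | p.2.2 = true}) .of_discrete .of_discrete (measurableSet_singleton false)
    hnonexp_ne_zero).symm

/-- ATT identification: under consistency, the non-experimental data condition,
and fusion, the death probability under treatment among those who would
naturally take treatment is identified by the observed death frequency among
treated individuals in the non-experimental data. -/
theorem att_identification
    {Ω : Type*} [MeasureSpace Ω] [IsProbabilityMeasure (ℙ : Measure Ω)]
    (Y A R As Y1 Y0 : Ω → Bool)
    (hY : Measurable Y) (hA : Measurable A) (hR : Measurable R)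
    (hAs : Measurable As) (hY1 : Measurable Y1) (hY0 : Measurable Y0)
    (hcons : ∀ ω, Y ω = if A ω then Y1 ω else Y0 ω)
    (hnonexp : ∀ ω, R ω = false → A ω = As ω)
    (hfusion : IndepFun (fun ω => (Y1 ω, Y0 ω, As ω)) R)
    (hpos1 : 0 < (ℙ {ω | As ω = true ∧ R ω = false}).toReal)
    (hpos2 : 0 < (ℙ {ω | As ω = true}).toReal) :
    (ℙ {ω | Y1 ω = true ∧ As ω = true}).toReal /
        (ℙ {ω | As ω = true}).toReal =
      (ℙ {ω | Y ω = true ∧ (A ω = true ∧ R ω = false)}).toReal /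
        (ℙ {ω | A ω = true ∧ R ω = false}).toReal :=
  att_identification_general Y A R As Y1 Y0 hcons hnonexp hfusion hpos1
end

section
/- (Identification of the untreated-stratum outcome, ATU-type identification) Let Y, A, R, A*, Y1, Y0 be Bool-valued random variables on a probability space (Ω, ℙ) such that: (consistency) Y ω = if A ω then Y1 ω else Y0 ω for all ω; (non-experimental data) A ω = A* ω for all ω with R ω = false; (fusion) the triple (Y1, Y0, A*) is independent of R; (randomization) Y1 and A are independent under the conditional measure ℙ[· | R = true]; and ℙ(A = true ∧ R = true) > 0, ℙ(A* = true ∧ R = false) > 0, ℙ(A* = false ∧ R = false) > 0. Then ℙ(Y1 = true | A* = false) = (ℙ(Y = true | A = true ∧ R = true) − ℙ(A = true | R = false) · ℙ(Y = true | A = true ∧ R = false)) / ℙ(A = false | R = false); i.e., the death probability under treatment among those who would naturally decline treatment is identified by combining the experimental and non-experimental data. -/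
open MeasureTheory ProbabilityTheory

/-!
Consistency and randomization give `ℙ(Y | A, R) = ℙ(Y1 | R) = ℙ(Y1)` on the experimental arm,
and on the non-experimental arm `A = A*`, so fusion gives `ℙ(A | ¬R) ℙ(Y | A, ¬R) = ℙ(Y1 ∧ A*)`
and `ℙ(¬A | ¬R) = ℙ(¬A*)`. The claim is then `ℙ(Y1 ∧ ¬A*) = ℙ(Y1) - ℙ(Y1 ∧ A*)`.
-/

namespace ProbabilityTheory

variable {Ω β γ δ : Type*} {mΩ : MeasurableSpace Ω} {μ : Measure Ω}
  {mβ : MeasurableSpace β} {mγ : MeasurableSpace γ} {mδ : MeasurableSpace δ}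
  {f : Ω → β} {g : Ω → γ} {r : Ω → δ} {s : Set β} {t : Set γ} {u : Set δ}

lemma IndepFun.measureReal_inter_preimage_eq_mul (h : IndepFun f g μ)
    (hs : MeasurableSet s) (ht : MeasurableSet t) :
    μ.real (f ⁻¹' s ∩ g ⁻¹' t) = μ.real (f ⁻¹' s) * μ.real (g ⁻¹' t) := by
  simp only [measureReal_def, h.measure_inter_preimage_eq_mul s t hs ht, ENNReal.toReal_mul]

lemma IndepFun.measureReal_inter_preimage_div_s16 (h : IndepFun f g μ)
    (hs : MeasurableSet s) (ht : MeasurableSet t) (hg : μ.real (g ⁻¹' t) ≠ 0) :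
    μ.real (f ⁻¹' s ∩ g ⁻¹' t) / μ.real (g ⁻¹' t) = μ.real (f ⁻¹' s) := by
  rw [h.measureReal_inter_preimage_eq_mul hs ht, mul_div_cancel_right₀ _ hg]

variable [IsFiniteMeasure μ]

lemma IndepFun.measureReal_inter_inter_preimage_mul_of_cond {E : Set Ω} (hE : MeasurableSet E)
    (h : IndepFun f g μ[|E]) (hs : MeasurableSet s) (ht : MeasurableSet t) :
    μ.real (E ∩ (f ⁻¹' s ∩ g ⁻¹' t)) * μ.real E =
      μ.real (E ∩ f ⁻¹' s) * μ.real (E ∩ g ⁻¹' t) := by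
  have key : μ (E ∩ (f ⁻¹' s ∩ g ⁻¹' t)) * μ E = μ (E ∩ f ⁻¹' s) * μ (E ∩ g ⁻¹' t) := by
    rw [← cond_mul_eq_inter hE, ← cond_mul_eq_inter hE, ← cond_mul_eq_inter hE,
      h.measure_inter_preimage_eq_mul s t hs ht]
    ring
  simpa only [measureReal_def, ENNReal.toReal_mul] using congrArg ENNReal.toReal key

lemma measureReal_inter_inter_preimage_of_indepFun_cond (hu : MeasurableSet u)
    (hru : MeasurableSet (r ⁻¹' u)) (hfr : IndepFun f r μ) (hfg : IndepFun f g μ[|r ⁻¹' u])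
    (hs : MeasurableSet s) (ht : MeasurableSet t) :
    μ.real (r ⁻¹' u ∩ (f ⁻¹' s ∩ g ⁻¹' t)) = μ.real (f ⁻¹' s) * μ.real (r ⁻¹' u ∩ g ⁻¹' t) := by
  by_cases hE : μ.real (r ⁻¹' u) = 0
  · rw [measureReal_mono_null Set.inter_subset_left hE,
      measureReal_mono_null Set.inter_subset_left hE, mul_zero]
  · have hcond := hfg.measureReal_inter_inter_preimage_mul_of_cond hru hs ht
    rw [Set.inter_comm (r ⁻¹' u) (f ⁻¹' s), hfr.measureReal_inter_preimage_eq_mul hs hu] at hcond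
    exact mul_right_cancel₀ hE (by rw [hcond]; ring)

end ProbabilityTheory

section FusionDesign

variable {Ω : Type*} {mΩ : MeasurableSpace Ω} {μ : Measure Ω} {Y A R As Y1 Y0 : Ω → Bool}

lemma outcome_and_treated_iff (hcons : ∀ ω, Y ω = if A ω then Y1 ω else Y0 ω) (ω : Ω) :
    Y ω = true ∧ A ω = true ↔ Y1 ω = true ∧ A ω = true := by
  rw [hcons ω]
  cases A ω <;> simp

lemma experimental_treated_ratio_eq [IsFiniteMeasure μ]
    (hcons : ∀ ω, Y ω = if A ω then Y1 ω else Y0 ω) (hR : Measurable R)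
    (hY1R : IndepFun Y1 R μ) (hrand : IndepFun Y1 A μ[|{ω | R ω = true}])
    (hpos : μ.real {ω | A ω = true ∧ R ω = true} ≠ 0) :
    μ.real {ω | Y ω = true ∧ (A ω = true ∧ R ω = true)} /
        μ.real {ω | A ω = true ∧ R ω = true} = μ.real {ω | Y1 ω = true} := by
  have hYAR : {ω | Y ω = true ∧ (A ω = true ∧ R ω = true)} =
      R ⁻¹' {true} ∩ (Y1 ⁻¹' {true} ∩ A ⁻¹' {true}) := by
    ext ω
    simp only [Set.mem_ofPred_eq, Set.mem_inter_iff, Set.mem_preimage, Set.mem_singleton_iff,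
      ← and_assoc, outcome_and_treated_iff hcons ω]
    tauto
  have hAR : {ω | A ω = true ∧ R ω = true} = R ⁻¹' {true} ∩ A ⁻¹' {true} := by
    ext ω
    simp only [Set.mem_ofPred_eq, Set.mem_inter_iff, Set.mem_preimage, Set.mem_singleton_iff]
    tauto
  rw [hYAR, measureReal_inter_inter_preimage_of_indepFun_cond (measurableSet_singleton _)
      (hR (measurableSet_singleton _)) hY1R hrand (measurableSet_singleton _)
      (measurableSet_singleton _), ← hAR, mul_div_cancel_right₀ _ hpos]
  rfl

lemma measureReal_and_eq_false [IsFiniteMeasure μ] (hAs : MeasurableSet {ω | As ω = true})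
    (P : Ω → Prop) :
    μ.real {ω | P ω ∧ As ω = false} = μ.real {ω | P ω} - μ.real {ω | P ω ∧ As ω = true} := by
  rw [eq_sub_iff_add_eq', ← measureReal_inter_add_sdiff (s := {ω | P ω}) hAs]
  congr 2
  ext ω
  simp

lemma setOf_and_nonexperimental_eq (hnonexp : ∀ ω, R ω = false → A ω = As ω)
    (P : Ω → Bool → Prop) :
    {ω | P ω (A ω) ∧ R ω = false} = {ω | P ω (As ω) ∧ R ω = false} := by
  ext ω
  simp only [Set.mem_ofPred_eq]
  exact and_congr_left fun hω => by rw [hnonexp ω hω]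

lemma nonexperimental_treated_product_eq [IsFiniteMeasure μ]
    (hcons : ∀ ω, Y ω = if A ω then Y1 ω else Y0 ω)
    (hnonexp : ∀ ω, R ω = false → A ω = As ω) (hfusion : IndepFun (fun ω => (Y1 ω, As ω)) R μ)
    (hpos : μ.real {ω | As ω = true ∧ R ω = false} ≠ 0) :
    μ.real {ω | A ω = true ∧ R ω = false} / μ.real {ω | R ω = false} *
        (μ.real {ω | Y ω = true ∧ (A ω = true ∧ R ω = false)} /
          μ.real {ω | A ω = true ∧ R ω = false}) =
      μ.real {ω | Y1 ω = true ∧ As ω = true} := by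
  have hAR : {ω | A ω = true ∧ R ω = false} = {ω | As ω = true ∧ R ω = false} :=
    setOf_and_nonexperimental_eq hnonexp fun _ a => a = true
  have hYAR : {ω | Y ω = true ∧ (A ω = true ∧ R ω = false)} =
      (fun ω => (Y1 ω, As ω)) ⁻¹' {(true, true)} ∩ R ⁻¹' {false} := by
    simp only [← and_assoc, outcome_and_treated_iff hcons]
    rw [setOf_and_nonexperimental_eq hnonexp fun ω a => Y1 ω = true ∧ a = true]
    ext ω
    simp [Prod.ext_iff]
  have hR : μ.real {ω | R ω = false} ≠ 0 := fun h =>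
    hpos (measureReal_mono_null (fun _ hω => hω.2) h)
  rw [hAR, div_mul_div_cancel₀' hpos, hYAR]
  refine (hfusion.measureReal_inter_preimage_div_s16 (measurableSet_singleton _)
    (measurableSet_singleton _) hR).trans ?_
  congr 1
  ext ω
  simp [Prod.ext_iff]

lemma nonexperimental_untreated_ratio_eq (hnonexp : ∀ ω, R ω = false → A ω = As ω)
    (hAsR : IndepFun As R μ) (hR : μ.real {ω | R ω = false} ≠ 0) :
    μ.real {ω | A ω = false ∧ R ω = false} / μ.real {ω | R ω = false} =
      μ.real {ω | As ω = false} := by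
  rw [setOf_and_nonexperimental_eq hnonexp fun _ a => a = false]
  exact hAsR.measureReal_inter_preimage_div_s16 (measurableSet_singleton _)
    (measurableSet_singleton _) hR

end FusionDesign

theorem atu_identification_general
    {Ω : Type*} [MeasureSpace Ω] [IsProbabilityMeasure (ℙ : Measure Ω)]
    (Y A R As Y1 Y0 : Ω → Bool)
    (hR : Measurable R)
    (hAs : Measurable As)
    (hcons : ∀ ω, Y ω = if A ω then Y1 ω else Y0 ω)
    (hnonexp : ∀ ω, R ω = false → A ω = As ω)
    (hfusion : IndepFun (fun ω => (Y1 ω, Y0 ω, As ω)) R)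
    (hrand : IndepFun Y1 A (ℙ[|{ω | R ω = true}]))
    (hpos1 : 0 < (ℙ {ω | A ω = true ∧ R ω = true}).toReal)
    (hpos2 : 0 < (ℙ {ω | As ω = true ∧ R ω = false}).toReal) :
    (ℙ {ω | Y1 ω = true ∧ As ω = false}).toReal /
        (ℙ {ω | As ω = false}).toReal =
      ((ℙ {ω | Y ω = true ∧ (A ω = true ∧ R ω = true)}).toReal /
          (ℙ {ω | A ω = true ∧ R ω = true}).toReal -
        (ℙ {ω | A ω = true ∧ R ω = false}).toReal /
            (ℙ {ω | R ω = false}).toReal *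
          ((ℙ {ω | Y ω = true ∧ (A ω = true ∧ R ω = false)}).toReal /
            (ℙ {ω | A ω = true ∧ R ω = false}).toReal)) /
        ((ℙ {ω | A ω = false ∧ R ω = false}).toReal /
          (ℙ {ω | R ω = false}).toReal) := by
  simp only [← measureReal_def] at hpos1 hpos2 ⊢
  have hR0 : (ℙ : Measure Ω).real {ω | R ω = false} ≠ 0 := fun h =>
    hpos2.ne' (measureReal_mono_null (fun _ hω => hω.2) h)
  have hY1R : IndepFun Y1 R := hfusion.comp measurable_fst measurable_id
  have hY1AsR : IndepFun (fun ω => (Y1 ω, As ω)) R :=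
    hfusion.comp (measurable_fst.prodMk (measurable_snd.comp measurable_snd)) measurable_id
  have hAsR : IndepFun As R := hfusion.comp (measurable_snd.comp measurable_snd) measurable_id
  rw [experimental_treated_ratio_eq hcons hR hY1R hrand hpos1.ne',
    nonexperimental_treated_product_eq hcons hnonexp hY1AsR hpos2.ne',
    nonexperimental_untreated_ratio_eq hnonexp hAsR hR0,
    measureReal_and_eq_false (hAs (measurableSet_singleton true))]

/-- ATU-type identification: under consistency, the non-experimental data
condition, fusion, and randomization of treatment in the experiment, the death
probability under treatment among those who would naturally decline treatment
is identified by combining the experimental and non-experimental data. -/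
theorem atu_identification
    {Ω : Type*} [MeasureSpace Ω] [IsProbabilityMeasure (ℙ : Measure Ω)]
    (Y A R As Y1 Y0 : Ω → Bool)
    (hY : Measurable Y) (hA : Measurable A) (hR : Measurable R)
    (hAs : Measurable As) (hY1 : Measurable Y1) (hY0 : Measurable Y0)
    (hcons : ∀ ω, Y ω = if A ω then Y1 ω else Y0 ω)
    (hnonexp : ∀ ω, R ω = false → A ω = As ω)
    (hfusion : IndepFun (fun ω => (Y1 ω, Y0 ω, As ω)) R)
    (hrand : IndepFun Y1 A (ℙ[|{ω | R ω = true}]))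
    (hpos1 : 0 < (ℙ {ω | A ω = true ∧ R ω = true}).toReal)
    (hpos2 : 0 < (ℙ {ω | As ω = true ∧ R ω = false}).toReal)
    (hpos3 : 0 < (ℙ {ω | As ω = false ∧ R ω = false}).toReal) :
    (ℙ {ω | Y1 ω = true ∧ As ω = false}).toReal /
        (ℙ {ω | As ω = false}).toReal =
      ((ℙ {ω | Y ω = true ∧ (A ω = true ∧ R ω = true)}).toReal /
          (ℙ {ω | A ω = true ∧ R ω = true}).toReal -
        (ℙ {ω | A ω = true ∧ R ω = false}).toReal /
            (ℙ {ω | R ω = false}).toReal *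
          ((ℙ {ω | Y ω = true ∧ (A ω = true ∧ R ω = false)}).toReal /
            (ℙ {ω | A ω = true ∧ R ω = false}).toReal)) /
        ((ℙ {ω | A ω = false ∧ R ω = false}).toReal /
          (ℙ {ω | R ω = false}).toReal) :=
  atu_identification_general Y A R As Y1 Y0 hR hAs hcons hnonexp hfusion hrand hpos1 hpos2
end
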